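/- Let X and Y be disjoint finite vertex sets with |X| ≥ 5 and |Y| ≥ 5, and let H be a P_6^2-free graph on vertex set X ∪ Y such that all but at most two of the pairs {x, y} with x ∈ X and y ∈ Y are edges of H. Then neither the induced subgraph H[X] nor the induced subgraph H[Y] contains a path on four vertices. -/

import Mathlib

/-!
Two distinct vertices `y₁, y₂` outside a path `a b c d`, with `y₁` adjacent to `a, b, c` and
`y₂` adjacent to `b, c, d`, span a copy of `P_6^2`, namely `a y₁ b c y₂ d`. Since only two
cross pairs are missing, at most two vertices of `Y` miss a neighbour in `X`, so at least three
vertices of `Y` are complete to `X`, and a path on four vertices in `H[X]` would extend to a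
`P_6^2`. The same holds with `X` and `Y` exchanged.
-/

open SimpleGraph

/-- A graph is `P6SqFree` if it has no subgraph isomorphic to the square of the
path on six vertices (vertices `v_1, …, v_6`, edges `v_i v_j` whenever `j - i ≤ 2`). -/
def P6SqFree {V : Type*} (G : SimpleGraph V) : Prop :=
  ¬ ∃ f : Fin 6 → V, Function.Injective f ∧
      ∀ i j : Fin 6, (i : ℕ) < (j : ℕ) → (j : ℕ) ≤ (i : ℕ) + 2 → G.Adj (f i) (f j)

/-- The number of triangles of a finite graph. -/
noncomputable def triCount {V : Type*} [Fintype V] [DecidableEq V] (G : SimpleGraph V) : ℕ :=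
  have : DecidableRel G.Adj := Classical.decRel _
  (G.cliqueFinset 3).card

/-- The number of edges of a finite graph. -/
noncomputable def edgeCount {V : Type*} (G : SimpleGraph V) : ℕ :=
  G.edgeSet.ncard

/-- The function `g` from the paper. -/
def gfun (n : ℕ) : ℕ :=
  if n % 6 = 2 ∨ n % 6 = 3 then n / 6 - 1
  else if n % 6 = 5 then n / 6 + 1
  else n / 6

/-- The graph `H_n^i`: complete bipartite graph between `{0,…,i-1}` and the rest,
together with `i/3` pairwise vertex-disjoint triangles inside the first part
(grouping the first part into consecutive triples). -/
def Hgraph (n i : ℕ) : SimpleGraph (Fin n) where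
  Adj v w := v ≠ w ∧
    ((v.val < i ∧ ¬ w.val < i) ∨ (¬ v.val < i ∧ w.val < i) ∨
     (v.val < i ∧ w.val < i ∧ v.val / 3 = w.val / 3))
  symm := by
    refine ⟨?_⟩
    rintro v w ⟨hne, h⟩
    refine ⟨hne.symm, ?_⟩
    rcases h with h | h | h
    · exact Or.inr (Or.inl ⟨h.2, h.1⟩)
    · exact Or.inl ⟨h.2, h.1⟩
    · exact Or.inr (Or.inr ⟨h.2.1, h.1, h.2.2.symm⟩)
  loopless := by refine ⟨?_⟩; intro v h; exact h.1 rfl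

section

variable {V : Type*} {H : SimpleGraph V}

theorem P6SqFree.false_of_path {a b c d y₁ y₂ : V} (hfree : P6SqFree H)
    (hpath : [a, b, c, d].Pairwise (· ≠ ·)) (hab : H.Adj a b) (hbc : H.Adj b c)
    (hcd : H.Adj c d) (hy : y₁ ≠ y₂) (hy₁d : y₁ ≠ d) (hy₂a : y₂ ≠ a)
    (hy₁ : ∀ v ∈ [a, b, c], H.Adj v y₁) (hy₂ : ∀ v ∈ [b, c, d], H.Adj v y₂) : False := by
  simp only [List.mem_cons, List.not_mem_nil, or_false, forall_eq_or_imp, forall_eq] at hy₁ hy₂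
  obtain ⟨hay₁, hby₁, hcy₁⟩ := hy₁
  obtain ⟨hby₂, hcy₂, hdy₂⟩ := hy₂
  simp only [List.pairwise_cons, List.mem_cons, List.not_mem_nil, or_false, forall_eq_or_imp,
    forall_eq, List.Pairwise.nil, and_true] at hpath
  obtain ⟨⟨-, hac, had⟩, ⟨-, hbd⟩, -⟩ := hpath
  refine hfree ⟨![a, y₁, b, c, y₂, d], ?_, ?_⟩
  · intro i j hij
    have := hay₁.ne; have := hby₁.ne; have := hcy₁.ne
    have := hby₂.ne; have := hcy₂.ne; have := hdy₂.ne
    fin_cases i <;> fin_cases j <;> simp_all [eq_comm]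
  · intro i j hij hji
    fin_cases i <;> fin_cases j <;> simp at hij hji <;> simp [*, hby₁.symm, hcy₁.symm, hdy₂.symm]

def crossNonEdges (H : SimpleGraph V) (X Y : Finset V) : Set (V × V) :=
  {p | p.1 ∈ X ∧ p.2 ∈ Y ∧ ¬ H.Adj p.1 p.2}

theorem crossNonEdges_finite (X Y : Finset V) : (crossNonEdges H X Y).Finite :=
  (X ×ˢ Y).finite_toSet.subset fun _ hp => Finset.mem_product.mpr ⟨hp.1, hp.2.1⟩

theorem ncard_crossNonEdges_comm (X Y : Finset V) :
    (crossNonEdges H Y X).ncard = (crossNonEdges H X Y).ncard := by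
  have : crossNonEdges H Y X = Prod.swap '' crossNonEdges H X Y := by
    ext ⟨y, x⟩
    simp [crossNonEdges, adj_comm, and_left_comm]
  rw [this, Set.ncard_image_of_injective _ Prod.swap_injective]

theorem exists_ne_forall_adj_of_ncard_crossNonEdges (X Y : Finset V)
    (h : (crossNonEdges H X Y).ncard + 2 ≤ Y.card) :
    ∃ y₁ ∈ Y, ∃ y₂ ∈ Y, y₁ ≠ y₂ ∧ ∀ x ∈ X, H.Adj x y₁ ∧ H.Adj x y₂ := by
  set B := Prod.snd '' crossNonEdges H X Y
  have hB : B.ncard ≤ (crossNonEdges H X Y).ncard :=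
    Set.ncard_image_le (crossNonEdges_finite X Y)
  have hgood : 1 < ((Y : Set V) \ B).ncard := by
    have := Set.le_ncard_sdiff B Y ((crossNonEdges_finite X Y).image _)
    rw [Set.ncard_coe_finset] at this
    omega
  have hadj : ∀ y ∈ (Y : Set V) \ B, ∀ x ∈ X, H.Adj x y := fun y hy x hx => by
    by_contra hxy
    exact hy.2 ⟨(x, y), ⟨hx, hy.1, hxy⟩, rfl⟩
  obtain ⟨y₁, y₂, hy₁, hy₂, hne⟩ := (Set.one_lt_ncard_iff (Y.finite_toSet.sdiff)).mp hgood
  exact ⟨y₁, hy₁.1, y₂, hy₂.1, hne, fun x hx => ⟨hadj y₁ hy₁ x hx, hadj y₂ hy₂ x hx⟩⟩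

theorem P6SqFree.not_exists_path_of_ncard_crossNonEdges (hfree : P6SqFree H) {X Y : Finset V}
    (hdisj : Disjoint X Y) (h : (crossNonEdges H X Y).ncard + 2 ≤ Y.card) :
    ¬ ∃ a b c d : V, a ∈ X ∧ b ∈ X ∧ c ∈ X ∧ d ∈ X ∧
        List.Pairwise (· ≠ ·) [a, b, c, d] ∧ H.Adj a b ∧ H.Adj b c ∧ H.Adj c d := by
  rintro ⟨a, b, c, d, ha, hb, hc, hd, hpath, hab, hbc, hcd⟩
  obtain ⟨y₁, hy₁, y₂, hy₂, hne, hcomplete⟩ := exists_ne_forall_adj_of_ncard_crossNonEdges X Y h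
  have hXY {x y : V} (hx : x ∈ X) (hy : y ∈ Y) : y ≠ x := fun h =>
    Finset.disjoint_left.mp hdisj hx (h ▸ hy)
  have hmem {v : V} (hv : v ∈ [a, b, c] ∨ v ∈ [b, c, d]) : v ∈ X := by
    simp only [List.mem_cons, List.not_mem_nil, or_false] at hv
    rcases hv with (rfl | rfl | rfl) | (rfl | rfl | rfl) <;> assumption
  exact hfree.false_of_path hpath hab hbc hcd hne (hXY hd hy₁) (hXY ha hy₂)
    (fun v hv => (hcomplete v (hmem (.inl hv))).1) (fun v hv => (hcomplete v (hmem (.inr hv))).2)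

end

theorem stmt7_general {V : Type*} (H : SimpleGraph V)
    (X Y : Finset V) (hdisj : Disjoint X Y)
    (hX : 5 ≤ X.card) (hY : 5 ≤ Y.card) (hfree : P6SqFree H)
    (hmiss : {p : V × V | p.1 ∈ X ∧ p.2 ∈ Y ∧ ¬ H.Adj p.1 p.2}.ncard ≤ 2) :
    (¬ ∃ a b c d : V, a ∈ X ∧ b ∈ X ∧ c ∈ X ∧ d ∈ X ∧
        List.Pairwise (· ≠ ·) [a, b, c, d] ∧ H.Adj a b ∧ H.Adj b c ∧ H.Adj c d) ∧
    (¬ ∃ a b c d : V, a ∈ Y ∧ b ∈ Y ∧ c ∈ Y ∧ d ∈ Y ∧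
        List.Pairwise (· ≠ ·) [a, b, c, d] ∧ H.Adj a b ∧ H.Adj b c ∧ H.Adj c d) := by
  have hmissXY : (crossNonEdges H X Y).ncard ≤ 2 := hmiss
  have hmissYX : (crossNonEdges H Y X).ncard ≤ 2 := (ncard_crossNonEdges_comm X Y).trans_le hmiss
  exact ⟨hfree.not_exists_path_of_ncard_crossNonEdges hdisj (by omega),
    hfree.not_exists_path_of_ncard_crossNonEdges hdisj.symm (by omega)⟩

/-- If `H` is `P_6^2`-free on vertex set `X ∪ Y` (disjoint parts of size `≥ 5`) and all
but at most two cross pairs are edges, then neither `H[X]` nor `H[Y]` contains a path on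
four vertices. -/
theorem stmt7 {V : Type*} [Fintype V] [DecidableEq V] (H : SimpleGraph V)
    (X Y : Finset V) (hdisj : Disjoint X Y) (hcover : X ∪ Y = Finset.univ)
    (hX : 5 ≤ X.card) (hY : 5 ≤ Y.card) (hfree : P6SqFree H)
    (hmiss : {p : V × V | p.1 ∈ X ∧ p.2 ∈ Y ∧ ¬ H.Adj p.1 p.2}.ncard ≤ 2) :
    (¬ ∃ a b c d : V, a ∈ X ∧ b ∈ X ∧ c ∈ X ∧ d ∈ X ∧
        List.Pairwise (· ≠ ·) [a, b, c, d] ∧ H.Adj a b ∧ H.Adj b c ∧ H.Adj c d) ∧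
    (¬ ∃ a b c d : V, a ∈ Y ∧ b ∈ Y ∧ c ∈ Y ∧ d ∈ Y ∧
        List.Pairwise (· ≠ ·) [a, b, c, d] ∧ H.Adj a b ∧ H.Adj b c ∧ H.Adj c d) :=
  stmt7_general H X Y hdisj hX hY hfree hmiss
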